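/- arXiv:2202.05793 — 2 statements merged into one kernel-verified Lean document; each statement's English description precedes it below -/
import Mathlib

section
/- Let D be a consistent domain in action language B, δ a partial state of D, and x an action executable in δ (i.e., executable(x,φ) ∈ D for some φ ⊆ δ). Then for P = ⟨D,δ,∅⟩ the program Π^a(P,1) ∪ {occ(x,0)} has exactly one answer set M, and the set {ℓ | holds(ℓ,1) ∈ M} is a partial state of D. -/
/- # Action language B -/

/-- A fluent literal: a fluent or its negation. -/
inductive Lit (F : Type) where
  | pos : F → Lit F
  | neg : F → Lit F

namespace Lit
/-- The complement of a fluent literal. -/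
def compl {F : Type} : Lit F → Lit F
  | .pos f => .neg f
  | .neg f => .pos f
end Lit

/-- A set of fluent literals is consistent if it contains no fluent together with
its negation. -/
def ConsistentLits {F : Type} (s : Set (Lit F)) : Prop :=
  ∀ f : F, ¬ (Lit.pos f ∈ s ∧ Lit.neg f ∈ s)

/-- A set of fluent literals is complete if it contains each fluent or its negation. -/
def CompleteLits {F : Type} (s : Set (Lit F)) : Prop :=
  ∀ f : F, Lit.pos f ∈ s ∨ Lit.neg f ∈ s

/-- A static causal law `caused(prem, concl)`. -/
structure StaticLaw (F : Type) where
  prem : Set (Lit F)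
  concl : Lit F

/-- A dynamic causal law `causes(act, concl, prem)`. -/
structure DynamicLaw (F A : Type) where
  act : A
  concl : Lit F
  prem : Set (Lit F)

/-- An executability condition `executable(act, prem)`. -/
structure ExecLaw (F A : Type) where
  act : A
  prem : Set (Lit F)

/-- A domain in the action language B. -/
structure BDomain (F A : Type) where
  statics : Set (StaticLaw F)
  dynamics : Set (DynamicLaw F A)
  execs : Set (ExecLaw F A)

/-- `v` is closed under the set `K` of static causal laws. -/
def ClosedUnder {F : Type} (K : Set (StaticLaw F)) (v : Set (Lit F)) : Prop :=
  ∀ r ∈ K, r.prem ⊆ v → r.concl ∈ v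

/-- `IsCl K u v`: `v` is the least consistent set of literals containing `u`
and closed under `K`. -/
def IsCl {F : Type} (K : Set (StaticLaw F)) (u v : Set (Lit F)) : Prop :=
  u ⊆ v ∧ ConsistentLits v ∧ ClosedUnder K v ∧
    ∀ w, u ⊆ w → ConsistentLits w → ClosedUnder K w → v ⊆ w

/-- A state: a maximal (complete) consistent set of fluent literals closed under
the static causal laws. -/
def IsState {F A : Type} (D : BDomain F A) (s : Set (Lit F)) : Prop :=
  CompleteLits s ∧ ConsistentLits s ∧ ClosedUnder D.statics s

/-- Action `a` is executable in `s`. -/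
def Executable {F A : Type} (D : BDomain F A) (a : A) (s : Set (Lit F)) : Prop :=
  ∃ e ∈ D.execs, e.act = a ∧ e.prem ⊆ s

/-- The direct effects `e(a,s)` of action `a` in `s`. -/
def directEffects {F A : Type} (D : BDomain F A) (a : A) (s : Set (Lit F)) : Set (Lit F) :=
  { l | ∃ d ∈ D.dynamics, d.act = a ∧ d.concl = l ∧ d.prem ⊆ s }

/-- The transition function `Φ` of a domain. -/
def Phi {F A : Type} (D : BDomain F A) (a : A) (s : Set (Lit F)) : Set (Set (Lit F)) :=
  { s' | Executable D a s ∧ IsState D s' ∧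
      IsCl D.statics (directEffects D a s ∪ (s ∩ s')) s' }

/-- A planning problem `⟨D, Γ, Δ⟩`; `init` is the set of literals `f` with
`initially(f) ∈ Γ`, and `goal` is `Δ`. -/
structure PlanningProblem (F A : Type) where
  dom : BDomain F A
  init : Set (Lit F)
  goal : Set (Lit F)

/-- The action theory `(D,Γ)` is consistent: `Φ(a,s) ≠ ∅` whenever `a` is executable
in state `s`, and the initial state is a state. -/
def ConsistentTheory {F A : Type} (P : PlanningProblem F A) : Prop :=
  (∀ (a : A) (s : Set (Lit F)), IsState P.dom s → Executable P.dom a s →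
      (Phi P.dom a s).Nonempty) ∧
  IsState P.dom P.init

/-- `s0 a0 s1 ... a_{n-1} s_n` is a trajectory. -/
def IsTrajectory {F A : Type} (D : BDomain F A) (n : ℕ)
    (ss : ℕ → Set (Lit F)) (acts : ℕ → A) : Prop :=
  IsState D (ss 0) ∧ ∀ i < n, ss (i + 1) ∈ Phi D (acts i) (ss i)

/- # Answer set programming -/

/-- A normal rule (`head = none` gives a constraint). -/
structure NRule (At : Type) where
  head : Option At
  pos : Set At
  neg : Set At

/-- A cardinality-1 choice rule `1{choices}1 ← pos, not neg`. -/
structure CRule (At : Type) where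
  choices : Set At
  pos : Set At
  neg : Set At

/-- A program: normal rules (and constraints) plus choice rules. -/
structure Program (At : Type) where
  normals : Set (NRule At)
  choiceRules : Set (CRule At)

/-- `X` is closed under the Gelfond–Lifschitz reduct of `P` w.r.t. `M`. The reduct
contains `h ← pos` for every normal rule with head `h` whose negative body is
disjoint from `M`, and `a ← pos` for every choice rule with negative body disjoint
from `M` and every chosen atom `a ∈ M`. -/
def ReductClosed {At : Type} (P : Program At) (M X : Set At) : Prop :=
  (∀ r ∈ P.normals, r.neg ∩ M = ∅ → r.pos ⊆ X → ∀ h, r.head = some h → h ∈ X) ∧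
  (∀ c ∈ P.choiceRules, c.neg ∩ M = ∅ → c.pos ⊆ X → ∀ a ∈ c.choices, a ∈ M → a ∈ X)

/-- `M` satisfies all constraints of `P`. -/
def SatConstraints {At : Type} (P : Program At) (M : Set At) : Prop :=
  ∀ r ∈ P.normals, r.head = none → ¬ (r.pos ⊆ M ∧ r.neg ∩ M = ∅)

/-- `M` satisfies the choice rules of `P`: when the body holds, exactly one chosen
atom is in `M`. -/
def SatChoices {At : Type} (P : Program At) (M : Set At) : Prop :=
  ∀ c ∈ P.choiceRules, c.pos ⊆ M → c.neg ∩ M = ∅ → ∃! a, a ∈ c.choices ∧ a ∈ M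

/-- `M` is an answer set (stable model) of `P`: it satisfies constraints and choice
rules and is the least model of the reduct of `P` w.r.t. `M`. -/
def AnswerSet {At : Type} (P : Program At) (M : Set At) : Prop :=
  SatConstraints P M ∧ SatChoices P M ∧ ReductClosed P M M ∧
    ∀ X, ReductClosed P M X → M ⊆ X


/-- The domain `D` is consistent: `Φ(a,s) ≠ ∅` whenever `a` is executable in the
state `s`. -/
def ConsistentDomain {F A : Type} (D : BDomain F A) : Prop :=
  ∀ (a : A) (s : Set (Lit F)), IsState D s → Executable D a s → (Phi D a s).Nonempty

/-- `δ` is a partial state of `D`: a consistent set of literals contained in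
some state. -/
def IsPartialState {F A : Type} (D : BDomain F A) (δ : Set (Lit F)) : Prop :=
  ConsistentLits δ ∧ ∃ s, IsState D s ∧ δ ⊆ s

/- # The approximation-based encoding Π^a(P,n) -/

/-- Atoms of `Π^a(P,n)`: besides the planning atoms, `de(l,T)` (direct effect) and
`ph(l,T)` (possibly holds). -/
inductive AAtom (F A : Type) where
  | holds : Lit F → ℕ → AAtom F A
  | occ : A → ℕ → AAtom F A
  | possible : A → ℕ → AAtom F A
  | de : Lit F → ℕ → AAtom F A
  | ph : Lit F → ℕ → AAtom F A
  | goal : AAtom F A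

/-- `holds(φ,t)` as a set of atoms. -/
def holdsSetA {F A : Type} (φ : Set (Lit F)) (t : ℕ) : Set (AAtom F A) :=
  { x | ∃ l ∈ φ, x = AAtom.holds l t }

/-- `{not holds(ℓ̄,T) | ℓ ∈ φ}`: the complements of `φ` at `t`, as `holds` atoms. -/
def holdsComplSetA {F A : Type} (φ : Set (Lit F)) (t : ℕ) : Set (AAtom F A) :=
  { x | ∃ l ∈ φ, x = AAtom.holds (Lit.compl l) t }

/-- `ph(φ,t)` as a set of atoms. -/
def phSetA {F A : Type} (φ : Set (Lit F)) (t : ℕ) : Set (AAtom F A) :=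
  { x | ∃ l ∈ φ, x = AAtom.ph l t }

/-- The approximation-based encoding `Π^a(P,n)` of the conformant planning problem
`P = ⟨D,δ,Δ⟩` with horizon `n`. -/
def PiApprox {F A : Type} (D : BDomain F A) (δ Δ : Set (Lit F)) (n : ℕ) :
    Program (AAtom F A) where
  normals :=
    -- facts holds(ℓ,0) for ℓ ∈ δ
    { r | ∃ l ∈ δ, r = ⟨some (AAtom.holds l 0), ∅, ∅⟩ } ∪
    -- possible(a,T) ← holds(φ,T)
    { r | ∃ e ∈ D.execs, ∃ t ≤ n,
        r = ⟨some (AAtom.possible e.act t), holdsSetA e.prem t, ∅⟩ } ∪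
    -- ← occ(A,T), not possible(A,T)
    { r | ∃ (a : A), ∃ t < n,
        r = ⟨none, {AAtom.occ a t}, {AAtom.possible a t}⟩ } ∪
    -- holds(f,T+1) ← occ(a,T), holds(φ,T)
    { r | ∃ d ∈ D.dynamics, ∃ t < n,
        r = ⟨some (AAtom.holds d.concl (t + 1)),
             insert (AAtom.occ d.act t) (holdsSetA d.prem t), ∅⟩ } ∪
    -- de(f,T+1) ← occ(a,T), holds(φ,T)
    { r | ∃ d ∈ D.dynamics, ∃ t < n,
        r = ⟨some (AAtom.de d.concl (t + 1)),
             insert (AAtom.occ d.act t) (holdsSetA d.prem t), ∅⟩ } ∪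
    -- ph(f,T+1) ← occ(a,T), not holds(φ̄,T), not de(f̄,T+1)
    { r | ∃ d ∈ D.dynamics, ∃ t < n,
        r = ⟨some (AAtom.ph d.concl (t + 1)), {AAtom.occ d.act t},
             insert (AAtom.de (Lit.compl d.concl) (t + 1))
               (holdsComplSetA d.prem t)⟩ } ∪
    -- holds(f,T) ← holds(φ,T)
    { r | ∃ sl ∈ D.statics, ∃ t ≤ n,
        r = ⟨some (AAtom.holds sl.concl t), holdsSetA sl.prem t, ∅⟩ } ∪
    -- ph(f,T) ← ph(φ,T)
    { r | ∃ sl ∈ D.statics, ∃ t ≤ n,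
        r = ⟨some (AAtom.ph sl.concl t), phSetA sl.prem t, ∅⟩ } ∪
    -- ph(ℓ,T+1) ← not holds(ℓ̄,T), not de(ℓ̄,T+1)
    { r | ∃ (l : Lit F), ∃ t < n,
        r = ⟨some (AAtom.ph l (t + 1)), ∅,
             {AAtom.holds (Lit.compl l) t, AAtom.de (Lit.compl l) (t + 1)}⟩ } ∪
    -- holds(ℓ,T) ← not ph(ℓ̄,T), for T ≠ 0
    { r | ∃ (l : Lit F), ∃ t, 0 < t ∧ t ≤ n ∧
        r = ⟨some (AAtom.holds l t), ∅, {AAtom.ph (Lit.compl l) t}⟩ } ∪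
    -- ← holds(F,T), holds(¬F,T)
    { r | ∃ (f : F), ∃ t ≤ n,
        r = ⟨none, {AAtom.holds (Lit.pos f) t, AAtom.holds (Lit.neg f) t}, ∅⟩ } ∪
    -- goal ← holds(Δ,n)  and  ← not goal
    { ⟨some AAtom.goal, holdsSetA Δ n, ∅⟩,
      ⟨none, ∅, {AAtom.goal}⟩ }
  choiceRules :=
    { c | ∃ t < n, c = ⟨{ x | ∃ a : A, x = AAtom.occ a t }, ∅, ∅⟩ }

/-- `Π^a(P,1) ∪ {occ(x,0)}`: the approximation encoding with horizon `1` together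
with the fact `occ(x,0)`. -/
def PiApproxOcc {F A : Type} (D : BDomain F A) (δ : Set (Lit F)) (x : A) :
    Program (AAtom F A) where
  normals := (PiApprox D δ (∅ : Set (Lit F)) 1).normals ∪
    { ⟨some (AAtom.occ x 0), ∅, ∅⟩ }
  choiceRules := (PiApprox D δ (∅ : Set (Lit F)) 1).choiceRules

section Aux
variable {F A : Type}

def clS (K : Set (StaticLaw F)) (u : Set (Lit F)) : Set (Lit F) :=
  {l | ∀ w : Set (Lit F), u ⊆ w → ClosedUnder K w → l ∈ w}

lemma subset_clS {K : Set (StaticLaw F)} {u : Set (Lit F)} : u ⊆ clS K u :=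
  fun _ hl _ hu _ => hu hl

lemma clS_closed {K : Set (StaticLaw F)} {u : Set (Lit F)} : ClosedUnder K (clS K u) :=
  fun r hr hp w hu hw => hw r hr (fun m hm => hp hm w hu hw)

lemma clS_min {K : Set (StaticLaw F)} {u w : Set (Lit F)} (h1 : u ⊆ w)
    (h2 : ClosedUnder K w) : clS K u ⊆ w := fun _ hl => hl w h1 h2

lemma cons_compl {s : Set (Lit F)} (h : ConsistentLits s) {l : Lit F}
    (h1 : l ∈ s) (h2 : l.compl ∈ s) : False := by
  cases l with
  | pos f => exact h f ⟨h1, h2⟩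
  | neg f => exact h f ⟨h2, h1⟩

lemma complete_compl {s : Set (Lit F)} (h : CompleteLits s) {l : Lit F}
    (hl : l ∉ s) : l.compl ∈ s := by
  cases l with
  | pos f => exact (h f).resolve_left hl
  | neg f => exact (h f).resolve_right hl

variable (D : BDomain F A) (δ : Set (Lit F)) (x : A)

def H0 : Set (Lit F) := clS D.statics δ
def DEF : Set (Lit F) := directEffects D x (H0 D δ)
def PH0 : Set (Lit F) := clS D.statics ∅
def PHbase : Set (Lit F) :=
  {l | l.compl ∉ H0 D δ ∧ l.compl ∉ DEF D δ x} ∪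
  {l | ∃ d ∈ D.dynamics, d.act = x ∧ d.concl = l ∧
      (∀ m ∈ d.prem, m.compl ∉ H0 D δ) ∧ l.compl ∉ DEF D δ x}
def PH1 : Set (Lit F) := clS D.statics (PHbase D δ x)
def H1B : Set (Lit F) := DEF D δ x ∪ {l | l.compl ∉ PH1 D δ x}
def H1 : Set (Lit F) := clS D.statics (H1B D δ x)
def POSS (H : Set (Lit F)) : Set A := {a | ∃ e ∈ D.execs, e.act = a ∧ e.prem ⊆ H}

def MM : Set (AAtom F A) := fun w => match w with
  | .holds l 0 => l ∈ H0 D δ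
  | .holds l 1 => l ∈ H1 D δ x
  | .holds _ _ => False
  | .occ a t => a = x ∧ t = 0
  | .possible a 0 => a ∈ POSS D (H0 D δ)
  | .possible a 1 => a ∈ POSS D (H1 D δ x)
  | .possible _ _ => False
  | .de l 1 => l ∈ DEF D δ x
  | .de _ _ => False
  | .ph l 0 => l ∈ PH0 D
  | .ph l 1 => l ∈ PH1 D δ x
  | .ph _ _ => False
  | .goal => True

lemma holdsSetA_subset {φ : Set (Lit F)} {t : ℕ} {X : Set (AAtom F A)} :
    holdsSetA φ t ⊆ X ↔ ∀ l ∈ φ, AAtom.holds l t ∈ X := by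
  constructor
  · intro h l hl; exact h ⟨l, hl, rfl⟩
  · rintro h _ ⟨l, hl, rfl⟩; exact h l hl

lemma phSetA_subset {φ : Set (Lit F)} {t : ℕ} {X : Set (AAtom F A)} :
    phSetA φ t ⊆ X ↔ ∀ l ∈ φ, AAtom.ph l t ∈ X := by
  constructor
  · intro h l hl; exact h ⟨l, hl, rfl⟩
  · rintro h _ ⟨l, hl, rfl⟩; exact h l hl

lemma holdsSetA_empty_sub {t : ℕ} {X : Set (AAtom F A)} :
    holdsSetA (∅ : Set (Lit F)) t ⊆ X := by
  rintro _ ⟨l, hl, _⟩; exact hl.elim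

lemma inter_empty {α : Type*} {s N : Set α} (h : s ∩ N = ∅) {a : α}
    (ha : a ∈ s) : a ∉ N := fun hN =>
  (Set.eq_empty_iff_forall_notMem.1 h a) ⟨ha, hN⟩

lemma singleton_inter_empty {α : Type*} {a : α} {N : Set α} (ha : a ∉ N) :
    ({a} : Set α) ∩ N = ∅ := by
  apply Set.eq_empty_iff_forall_notMem.2; rintro y ⟨rfl, hyN⟩; exact ha hyN

lemma insert_inter_empty {α : Type*} {a : α} {s N : Set α} (ha : a ∉ N)
    (hs : s ∩ N = ∅) : (insert a s) ∩ N = ∅ := by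
  apply Set.eq_empty_iff_forall_notMem.2
  rintro y ⟨(rfl | hy), hyN⟩
  · exact ha hyN
  · exact (Set.eq_empty_iff_forall_notMem.1 hs y) ⟨hy, hyN⟩

lemma hcs_inter_empty {φ : Set (Lit F)} {t : ℕ} {N : Set (AAtom F A)}
    (h : ∀ m ∈ φ, AAtom.holds m.compl t ∉ N) : holdsComplSetA φ t ∩ N = ∅ := by
  apply Set.eq_empty_iff_forall_notMem.2
  rintro y ⟨⟨m, hm, rfl⟩, hyN⟩; exact h m hm hyN

/- rule membership lemmas -/
lemma memS1 {l : Lit F} (hl : l ∈ δ) :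
    (⟨some (AAtom.holds l 0), ∅, ∅⟩ : NRule (AAtom F A)) ∈ (PiApproxOcc D δ x).normals :=
  Or.inl <| Or.inl <| Or.inl <| Or.inl <| Or.inl <| Or.inl <| Or.inl <| Or.inl <|
    Or.inl <| Or.inl <| Or.inl <| Or.inl ⟨l, hl, rfl⟩

lemma memS2 {e : ExecLaw F A} (he : e ∈ D.execs) {t : ℕ} (ht : t ≤ 1) :
    (⟨some (AAtom.possible e.act t), holdsSetA e.prem t, ∅⟩ : NRule (AAtom F A)) ∈
      (PiApproxOcc D δ x).normals :=
  Or.inl <| Or.inl <| Or.inl <| Or.inl <| Or.inl <| Or.inl <| Or.inl <| Or.inl <|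
    Or.inl <| Or.inl <| Or.inl <| Or.inr ⟨e, he, t, ht, rfl⟩

lemma memS4 {d : DynamicLaw F A} (hd : d ∈ D.dynamics) :
    (⟨some (AAtom.holds d.concl 1), insert (AAtom.occ d.act 0) (holdsSetA d.prem 0), ∅⟩ :
      NRule (AAtom F A)) ∈ (PiApproxOcc D δ x).normals :=
  Or.inl <| Or.inl <| Or.inl <| Or.inl <| Or.inl <| Or.inl <| Or.inl <| Or.inl <|
    Or.inl <| Or.inr ⟨d, hd, 0, Nat.zero_lt_one, rfl⟩

lemma memS5 {d : DynamicLaw F A} (hd : d ∈ D.dynamics) :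
    (⟨some (AAtom.de d.concl 1), insert (AAtom.occ d.act 0) (holdsSetA d.prem 0), ∅⟩ :
      NRule (AAtom F A)) ∈ (PiApproxOcc D δ x).normals :=
  Or.inl <| Or.inl <| Or.inl <| Or.inl <| Or.inl <| Or.inl <| Or.inl <| Or.inl <|
    Or.inr ⟨d, hd, 0, Nat.zero_lt_one, rfl⟩

lemma memS6 {d : DynamicLaw F A} (hd : d ∈ D.dynamics) :
    (⟨some (AAtom.ph d.concl 1), {AAtom.occ d.act 0},
      insert (AAtom.de (Lit.compl d.concl) 1) (holdsComplSetA d.prem 0)⟩ :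
      NRule (AAtom F A)) ∈ (PiApproxOcc D δ x).normals :=
  Or.inl <| Or.inl <| Or.inl <| Or.inl <| Or.inl <| Or.inl <| Or.inl <|
    Or.inr ⟨d, hd, 0, Nat.zero_lt_one, rfl⟩

lemma memS7 {sl : StaticLaw F} (hsl : sl ∈ D.statics) {t : ℕ} (ht : t ≤ 1) :
    (⟨some (AAtom.holds sl.concl t), holdsSetA sl.prem t, ∅⟩ : NRule (AAtom F A)) ∈
      (PiApproxOcc D δ x).normals :=
  Or.inl <| Or.inl <| Or.inl <| Or.inl <| Or.inl <| Or.inl <|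
    Or.inr ⟨sl, hsl, t, ht, rfl⟩

lemma memS8 {sl : StaticLaw F} (hsl : sl ∈ D.statics) {t : ℕ} (ht : t ≤ 1) :
    (⟨some (AAtom.ph sl.concl t), phSetA sl.prem t, ∅⟩ : NRule (AAtom F A)) ∈
      (PiApproxOcc D δ x).normals :=
  Or.inl <| Or.inl <| Or.inl <| Or.inl <| Or.inl <|
    Or.inr ⟨sl, hsl, t, ht, rfl⟩

lemma memS9 (l : Lit F) :
    (⟨some (AAtom.ph l 1), ∅,
      {AAtom.holds (Lit.compl l) 0, AAtom.de (Lit.compl l) 1}⟩ : NRule (AAtom F A)) ∈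
      (PiApproxOcc D δ x).normals :=
  Or.inl <| Or.inl <| Or.inl <| Or.inl <|
    Or.inr ⟨l, 0, Nat.zero_lt_one, rfl⟩

lemma memS10 (l : Lit F) :
    (⟨some (AAtom.holds l 1), ∅, {AAtom.ph (Lit.compl l) 1}⟩ : NRule (AAtom F A)) ∈
      (PiApproxOcc D δ x).normals :=
  Or.inl <| Or.inl <| Or.inl <|
    Or.inr ⟨l, 1, Nat.zero_lt_one, le_refl 1, rfl⟩

lemma memS12a :
    (⟨some AAtom.goal, holdsSetA (∅ : Set (Lit F)) 1, ∅⟩ : NRule (AAtom F A)) ∈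
      (PiApproxOcc D δ x).normals :=
  Or.inl <| Or.inr <| Or.inl rfl

lemma memS13 :
    (⟨some (AAtom.occ x 0), ∅, ∅⟩ : NRule (AAtom F A)) ∈ (PiApproxOcc D δ x).normals :=
  Or.inr rfl

lemma memC0 :
    (⟨{ w | ∃ a : A, w = AAtom.occ a 0 }, ∅, ∅⟩ : CRule (AAtom F A)) ∈
      (PiApproxOcc D δ x).choiceRules :=
  ⟨0, Nat.zero_lt_one, rfl⟩

lemma core (hD : ConsistentDomain D) (hδ : IsPartialState D δ)
    (hx : ∃ e ∈ D.execs, e.act = x ∧ e.prem ⊆ δ) :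
    ∃ s s' : Set (Lit F), IsState D s ∧ IsState D s' ∧ H0 D δ ⊆ s ∧ H1 D δ x ⊆ s' := by
  obtain ⟨_, s, hs, hsub⟩ := hδ
  have hH0s : H0 D δ ⊆ s := clS_min hsub hs.2.2
  obtain ⟨e, he, hea, hep⟩ := hx
  have hex : Executable D x s := ⟨e, he, hea, fun m hm => hsub (hep hm)⟩
  obtain ⟨s', hexe, hstate', hcl⟩ := hD x s hs hex
  have hEs' : directEffects D x s ∪ (s ∩ s') ⊆ s' := hcl.1
  have hDEE : DEF D δ x ⊆ directEffects D x s := by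
    rintro l ⟨d, hd, hact, hconc, hprem⟩
    exact ⟨d, hd, hact, hconc, fun m hm => hH0s (hprem hm)⟩
  have hEs'' : directEffects D x s ⊆ s' := fun l hl => hEs' (Or.inl hl)
  have hE_PH : directEffects D x s ⊆ PHbase D δ x := by
    rintro l ⟨d, hd, hact, hconc, hprem⟩
    refine Or.inr ⟨d, hd, hact, hconc, fun m hm hc => ?_, fun hc => ?_⟩
    · exact cons_compl hs.2.1 (hprem hm) (hH0s hc)
    · exact cons_compl hstate'.2.1 (hEs'' ⟨d, hd, hact, hconc, hprem⟩) (hEs'' (hDEE hc))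
  have hssPH : s ∩ s' ⊆ PHbase D δ x := by
    rintro l ⟨hls, hls'⟩
    exact Or.inl ⟨fun hc => cons_compl hs.2.1 hls (hH0s hc),
      fun hc => cons_compl hstate'.2.1 hls' (hEs'' (hDEE hc))⟩
  have hs'PH1 : s' ⊆ PH1 D δ x := by
    have h1 : directEffects D x s ∪ (s ∩ s') ⊆ PH1 D δ x ∩ s' := by
      rintro l (hl | hl)
      · exact ⟨subset_clS (hE_PH hl), hEs' (Or.inl hl)⟩
      · exact ⟨subset_clS (hssPH hl), hEs' (Or.inr hl)⟩
    have h2 : ConsistentLits (PH1 D δ x ∩ s') := fun f hf =>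
      hstate'.2.1 f ⟨hf.1.2, hf.2.2⟩
    have h3 : ClosedUnder D.statics (PH1 D δ x ∩ s') := fun r hr hp =>
      ⟨clS_closed r hr (fun m hm => (hp hm).1), hstate'.2.2 r hr (fun m hm => (hp hm).2)⟩
    exact fun l hl => (hcl.2.2.2 _ h1 h2 h3 hl).1
  have hH1s' : H1 D δ x ⊆ s' := by
    apply clS_min _ hstate'.2.2
    rintro l (hl | hl)
    · exact hEs'' (hDEE hl)
    · by_contra hns
      exact hl (hs'PH1 (complete_compl hstate'.1 hns))
  exact ⟨s, s', hs, hstate', hH0s, hH1s'⟩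

lemma MM_semi (N : Set (AAtom F A))
    (hH0N : ∀ l ∈ H0 D δ, AAtom.holds l 0 ∈ N)
    (hDEN : ∀ l ∈ DEF D δ x, AAtom.de l 1 ∈ N)
    (hPH1N : ∀ l ∈ PH1 D δ x, AAtom.ph l 1 ∈ N) :
    ∀ r ∈ (PiApproxOcc D δ x).normals, r.neg ∩ N = ∅ → r.pos ⊆ MM D δ x →
      ∀ h, r.head = some h → h ∈ MM D δ x := by
  intro r hr hneg hpos h hh
  rcases hr with ((((((((((((⟨l, hl, rfl⟩ | ⟨e, he, t, ht, rfl⟩) | ⟨a, t, ht, rfl⟩) |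
    ⟨d, hd, t, ht, rfl⟩) | ⟨d, hd, t, ht, rfl⟩) | ⟨d, hd, t, ht, rfl⟩) |
    ⟨sl, hsl, t, ht, rfl⟩) | ⟨sl, hsl, t, ht, rfl⟩) | ⟨l, t, ht, rfl⟩) |
    ⟨l, t, ht0, ht1, rfl⟩) | ⟨f, t, ht, rfl⟩) | (rfl | rfl)) | rfl)
  -- S1: facts
  · obtain rfl := Option.some.inj hh
    exact subset_clS hl
  -- S2: possible
  · obtain rfl := Option.some.inj hh
    rcases Nat.le_one_iff_eq_zero_or_eq_one.mp ht with rfl | rfl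
    · exact ⟨e, he, rfl, fun m hm => hpos ⟨m, hm, rfl⟩⟩
    · exact ⟨e, he, rfl, fun m hm => hpos ⟨m, hm, rfl⟩⟩
  -- S3: constraint
  · exact (Option.some_ne_none h hh.symm).elim
  -- S4: dynamic holds
  · obtain rfl : t = 0 := Nat.lt_one_iff.mp ht
    obtain rfl := Option.some.inj hh
    have hax : d.act = x := (hpos (Set.mem_insert _ _)).1
    have hprem : d.prem ⊆ H0 D δ := fun m hm => hpos (Set.mem_insert_of_mem _ ⟨m, hm, rfl⟩)
    exact subset_clS (Or.inl ⟨d, hd, hax, rfl, hprem⟩)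
  -- S5: de
  · obtain rfl : t = 0 := Nat.lt_one_iff.mp ht
    obtain rfl := Option.some.inj hh
    have hax : d.act = x := (hpos (Set.mem_insert _ _)).1
    have hprem : d.prem ⊆ H0 D δ := fun m hm => hpos (Set.mem_insert_of_mem _ ⟨m, hm, rfl⟩)
    exact ⟨d, hd, hax, rfl, hprem⟩
  -- S6: ph dynamic
  · obtain rfl : t = 0 := Nat.lt_one_iff.mp ht
    obtain rfl := Option.some.inj hh
    have hax : d.act = x := (hpos rfl).1
    have h1 : Lit.compl d.concl ∉ DEF D δ x := fun hc =>
      inter_empty hneg (Set.mem_insert _ _) (hDEN _ hc)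
    have h2 : ∀ m ∈ d.prem, Lit.compl m ∉ H0 D δ := fun m hm hc =>
      inter_empty hneg (Set.mem_insert_of_mem _ ⟨m, hm, rfl⟩) (hH0N _ hc)
    exact subset_clS (Or.inr ⟨d, hd, hax, rfl, h2, h1⟩)
  -- S7: static holds
  · obtain rfl := Option.some.inj hh
    rcases Nat.le_one_iff_eq_zero_or_eq_one.mp ht with rfl | rfl
    · exact clS_closed sl hsl (fun m hm => hpos ⟨m, hm, rfl⟩)
    · exact clS_closed sl hsl (fun m hm => hpos ⟨m, hm, rfl⟩)
  -- S8: static ph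
  · obtain rfl := Option.some.inj hh
    rcases Nat.le_one_iff_eq_zero_or_eq_one.mp ht with rfl | rfl
    · exact clS_closed sl hsl (fun m hm => hpos ⟨m, hm, rfl⟩)
    · exact clS_closed sl hsl (fun m hm => hpos ⟨m, hm, rfl⟩)
  -- S9: ph inertia
  · obtain rfl : t = 0 := Nat.lt_one_iff.mp ht
    obtain rfl := Option.some.inj hh
    have h1 : Lit.compl l ∉ H0 D δ := fun hc =>
      inter_empty hneg (Set.mem_insert _ _) (hH0N _ hc)
    have h2 : Lit.compl l ∉ DEF D δ x := fun hc =>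
      inter_empty hneg (Set.mem_insert_of_mem _ rfl) (hDEN _ hc)
    exact subset_clS (Or.inl ⟨h1, h2⟩)
  -- S10: holds inertia
  · obtain rfl : t = 1 := le_antisymm ht1 ht0
    obtain rfl := Option.some.inj hh
    have h1 : Lit.compl l ∉ PH1 D δ x := fun hc => inter_empty hneg rfl (hPH1N _ hc)
    exact subset_clS (Or.inr h1)
  -- S11: consistency constraint
  · exact (Option.some_ne_none h hh.symm).elim
  -- S12a: goal rule
  · obtain rfl := Option.some.inj hh
    trivial
  -- S12b: goal constraint
  · exact (Option.some_ne_none h hh.symm).elim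
  -- S13: occ fact
  · obtain rfl := Option.some.inj hh
    exact ⟨rfl, rfl⟩

variable {N X : Set (AAtom F A)}

lemma occX (hRC : ReductClosed (PiApproxOcc D δ x) N X) : AAtom.occ x 0 ∈ X :=
  hRC.1 _ (memS13 D δ x) (Set.empty_inter N) (Set.empty_subset X) _ rfl

lemma goalX (hRC : ReductClosed (PiApproxOcc D δ x) N X) : AAtom.goal ∈ X :=
  hRC.1 _ (memS12a D δ x) (Set.empty_inter N) holdsSetA_empty_sub _ rfl

lemma H0X (hRC : ReductClosed (PiApproxOcc D δ x) N X) :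
    ∀ l ∈ H0 D δ, AAtom.holds l 0 ∈ X := by
  intro l hl
  have h : H0 D δ ⊆ {m | AAtom.holds m 0 ∈ X} := by
    apply clS_min
    · intro m hm
      exact hRC.1 _ (memS1 D δ x hm) (Set.empty_inter N) (Set.empty_subset X) _ rfl
    · intro sl hsl hp
      exact hRC.1 _ (memS7 D δ x hsl (Nat.zero_le 1)) (Set.empty_inter N)
        (holdsSetA_subset.2 hp) _ rfl
  exact h hl

lemma DEX (hRC : ReductClosed (PiApproxOcc D δ x) N X) :
    ∀ l ∈ DEF D δ x, AAtom.de l 1 ∈ X := by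
  rintro l ⟨d, hd, hax, rfl, hprem⟩
  refine hRC.1 _ (memS5 D δ x hd) (Set.empty_inter N) ?_ _ rfl
  exact Set.insert_subset_iff.2 ⟨by rw [hax]; exact occX D δ x hRC,
    holdsSetA_subset.2 fun m hm => H0X D δ x hRC m (hprem hm)⟩

lemma PH0X (hRC : ReductClosed (PiApproxOcc D δ x) N X) :
    ∀ l ∈ PH0 D, AAtom.ph l 0 ∈ X := by
  intro l hl
  have h : PH0 D ⊆ {m | AAtom.ph m 0 ∈ X} := by
    apply clS_min (Set.empty_subset _)
    intro sl hsl hp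
    exact hRC.1 _ (memS8 D δ x hsl (Nat.zero_le 1)) (Set.empty_inter N)
      (phSetA_subset.2 hp) _ rfl
  exact h hl

lemma PH1X (hRC : ReductClosed (PiApproxOcc D δ x) N X)
    (hh0 : ∀ l, AAtom.holds l 0 ∈ N → l ∈ H0 D δ)
    (hde : ∀ l, AAtom.de l 1 ∈ N → l ∈ DEF D δ x) :
    ∀ l ∈ PH1 D δ x, AAtom.ph l 1 ∈ X := by
  intro l hl
  have h : PH1 D δ x ⊆ {m | AAtom.ph m 1 ∈ X} := by
    apply clS_min
    · rintro m (⟨h1, h2⟩ | ⟨d, hd, hax, rfl, hprem, hcde⟩)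
      · refine hRC.1 _ (memS9 D δ x m) ?_ (Set.empty_subset X) _ rfl
        exact insert_inter_empty (fun hc => h1 (hh0 _ hc))
          (singleton_inter_empty (fun hc => h2 (hde _ hc)))
      · refine hRC.1 _ (memS6 D δ x hd) ?_ ?_ _ rfl
        · exact insert_inter_empty (fun hc => hcde (hde _ hc))
            (hcs_inter_empty fun m hm hc => hprem m hm (hh0 _ hc))
        · exact Set.singleton_subset_iff.2 (by rw [hax]; exact occX D δ x hRC)
    · intro sl hsl hp
      exact hRC.1 _ (memS8 D δ x hsl le_rfl) (Set.empty_inter N) (phSetA_subset.2 hp) _ rfl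
  exact h hl

lemma H1X (hRC : ReductClosed (PiApproxOcc D δ x) N X)
    (hph : ∀ l, AAtom.ph l 1 ∈ N → l ∈ PH1 D δ x) :
    ∀ l ∈ H1 D δ x, AAtom.holds l 1 ∈ X := by
  intro l hl
  have h : H1 D δ x ⊆ {m | AAtom.holds m 1 ∈ X} := by
    apply clS_min
    · rintro m (⟨d, hd, hax, rfl, hprem⟩ | hc)
      · refine hRC.1 _ (memS4 D δ x hd) (Set.empty_inter N) ?_ _ rfl
        exact Set.insert_subset_iff.2 ⟨by rw [hax]; exact occX D δ x hRC,
          holdsSetA_subset.2 fun m hm => H0X D δ x hRC m (hprem hm)⟩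
      · exact hRC.1 _ (memS10 D δ x m) (singleton_inter_empty fun hk => hc (hph _ hk))
          (Set.empty_subset X) _ rfl
    · intro sl hsl hp
      exact hRC.1 _ (memS7 D δ x hsl le_rfl) (Set.empty_inter N)
        (holdsSetA_subset.2 hp) _ rfl
  exact h hl

lemma MM_sub_X (hRC : ReductClosed (PiApproxOcc D δ x) N X)
    (hh0 : ∀ l, AAtom.holds l 0 ∈ N → l ∈ H0 D δ)
    (hde : ∀ l, AAtom.de l 1 ∈ N → l ∈ DEF D δ x)
    (hph : ∀ l, AAtom.ph l 1 ∈ N → l ∈ PH1 D δ x) :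
    MM D δ x ⊆ X := by
  intro a ha
  cases a with
  | holds l t =>
    rcases t with _ | _ | t
    · exact H0X D δ x hRC l ha
    · exact H1X D δ x hRC hph l ha
    · exact False.elim ha
  | occ a t =>
    obtain ⟨h1, rfl⟩ := ha
    rw [h1]; exact occX D δ x hRC
  | possible a t =>
    rcases t with _ | _ | t
    · obtain ⟨e, he, hax, hprem⟩ := ha
      have h := hRC.1 _ (memS2 D δ x he (Nat.zero_le 1)) (Set.empty_inter N)
        (holdsSetA_subset.2 fun m hm => H0X D δ x hRC m (hprem hm)) _ rfl
      rwa [hax] at h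
    · obtain ⟨e, he, hax, hprem⟩ := ha
      have h := hRC.1 _ (memS2 D δ x he le_rfl) (Set.empty_inter N)
        (holdsSetA_subset.2 fun m hm => H1X D δ x hRC hph m (hprem hm)) _ rfl
      rwa [hax] at h
    · exact False.elim ha
  | de l t =>
    rcases t with _ | _ | t
    · exact False.elim ha
    · exact DEX D δ x hRC l ha
    · exact False.elim ha
  | ph l t =>
    rcases t with _ | _ | t
    · exact PH0X D δ x hRC l ha
    · exact PH1X D δ x hRC hh0 hde l ha
    · exact False.elim ha
  | goal => exact goalX D δ x hRC
def GoodA : AAtom F A → Prop := fun w => match w with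
  | .holds l 0 => l ∈ H0 D δ
  | .de l t => t = 1 ∧ l ∈ DEF D δ x
  | .occ a t => a = x ∧ t = 0
  | _ => True

lemma good_of_answer (hN : AnswerSet (PiApproxOcc D δ x) N) :
    ∀ w ∈ N, GoodA D δ x w := by
  obtain ⟨hcon, hch, hRC, hmin⟩ := hN
  have hoccN : AAtom.occ x 0 ∈ N := occX D δ x hRC
  have huniq : ∀ a : A, AAtom.occ a 0 ∈ N → a = x := by
    intro a haN
    obtain ⟨y, hy, hyu⟩ := hch _ (memC0 D δ x) (Set.empty_subset N) (Set.empty_inter N)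
    have h1 := hyu _ ⟨⟨a, rfl⟩, haN⟩
    have h2 := hyu _ ⟨⟨x, rfl⟩, hoccN⟩
    have h3 : AAtom.occ a 0 = AAtom.occ x 0 := h1.trans h2.symm
    exact (AAtom.occ.inj h3).1
  have hRC0 : ReductClosed (PiApproxOcc D δ x)
      N {w | w ∈ N ∧ GoodA D δ x w} := by
    constructor
    · intro r hr hneg hpos h hh
      have hsubN : {w | w ∈ N ∧ GoodA D δ x w} ⊆ N := fun w hw => hw.1
      have hhN : h ∈ N := hRC.1 r hr hneg (hpos.trans hsubN) h hh
      refine ⟨hhN, ?_⟩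
      rcases hr with ((((((((((((⟨l, hl, rfl⟩ | ⟨e, he, t, ht, rfl⟩) | ⟨a, t, ht, rfl⟩) |
        ⟨d, hd, t, ht, rfl⟩) | ⟨d, hd, t, ht, rfl⟩) | ⟨d, hd, t, ht, rfl⟩) |
        ⟨sl, hsl, t, ht, rfl⟩) | ⟨sl, hsl, t, ht, rfl⟩) | ⟨l, t, ht, rfl⟩) |
        ⟨l, t, ht0, ht1, rfl⟩) | ⟨f, t, ht, rfl⟩) | (rfl | rfl)) | rfl)
      · obtain rfl := Option.some.inj hh
        exact subset_clS hl
      · obtain rfl := Option.some.inj hh; trivial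
      · exact (Option.some_ne_none h hh.symm).elim
      · obtain rfl : t = 0 := Nat.lt_one_iff.mp ht
        obtain rfl := Option.some.inj hh; trivial
      · obtain rfl : t = 0 := Nat.lt_one_iff.mp ht
        obtain rfl := Option.some.inj hh
        have hax : d.act = x := (hpos (Set.mem_insert _ _)).2.1
        have hprem : d.prem ⊆ H0 D δ := fun m hm =>
          (hpos (Set.mem_insert_of_mem _ ⟨m, hm, rfl⟩)).2
        exact ⟨rfl, d, hd, hax, rfl, hprem⟩
      · obtain rfl : t = 0 := Nat.lt_one_iff.mp ht
        obtain rfl := Option.some.inj hh; trivial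
      · obtain rfl := Option.some.inj hh
        rcases Nat.le_one_iff_eq_zero_or_eq_one.mp ht with rfl | rfl
        · exact clS_closed sl hsl (fun m hm => (hpos ⟨m, hm, rfl⟩).2)
        · trivial
      · obtain rfl := Option.some.inj hh
        rcases Nat.le_one_iff_eq_zero_or_eq_one.mp ht with rfl | rfl <;> trivial
      · obtain rfl : t = 0 := Nat.lt_one_iff.mp ht
        obtain rfl := Option.some.inj hh; trivial
      · obtain rfl : t = 1 := le_antisymm ht1 ht0
        obtain rfl := Option.some.inj hh; trivial
      · exact (Option.some_ne_none h hh.symm).elim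
      · obtain rfl := Option.some.inj hh; trivial
      · exact (Option.some_ne_none h hh.symm).elim
      · obtain rfl := Option.some.inj hh
        exact ⟨rfl, rfl⟩
    · rintro c ⟨t, ht, rfl⟩ hneg hpos a ⟨b, rfl⟩ haN
      obtain rfl : t = 0 := Nat.lt_one_iff.mp ht
      exact ⟨haN, huniq b haN, rfl⟩
  have hmin' := hmin _ hRC0
  intro w hw; exact (hmin' hw).2

lemma satCon (consH0 : ConsistentLits (H0 D δ)) (consH1 : ConsistentLits (H1 D δ x))
    (hx : ∃ e ∈ D.execs, e.act = x ∧ e.prem ⊆ δ) :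
    SatConstraints (PiApproxOcc D δ x) (MM D δ x) := by
  intro r hr hnone
  rcases hr with ((((((((((((⟨l, hl, rfl⟩ | ⟨e, he, t, ht, rfl⟩) | ⟨a, t, ht, rfl⟩) |
    ⟨d, hd, t, ht, rfl⟩) | ⟨d, hd, t, ht, rfl⟩) | ⟨d, hd, t, ht, rfl⟩) |
    ⟨sl, hsl, t, ht, rfl⟩) | ⟨sl, hsl, t, ht, rfl⟩) | ⟨l, t, ht, rfl⟩) |
    ⟨l, t, ht0, ht1, rfl⟩) | ⟨f, t, ht, rfl⟩) | (rfl | rfl)) | rfl)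
  · exact (Option.some_ne_none _ hnone).elim
  · exact (Option.some_ne_none _ hnone).elim
  · obtain rfl : t = 0 := Nat.lt_one_iff.mp ht
    rintro ⟨hpos, hneg⟩
    have hax : a = x := (hpos rfl).1
    obtain ⟨e, he, hea, hep⟩ := hx
    have hposs : AAtom.possible a 0 ∈ MM D δ x := by
      rw [hax]; exact ⟨e, he, hea, fun m hm => subset_clS (hep hm)⟩
    exact inter_empty hneg rfl hposs
  · exact (Option.some_ne_none _ hnone).elim
  · exact (Option.some_ne_none _ hnone).elim
  · exact (Option.some_ne_none _ hnone).elim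
  · exact (Option.some_ne_none _ hnone).elim
  · exact (Option.some_ne_none _ hnone).elim
  · exact (Option.some_ne_none _ hnone).elim
  · exact (Option.some_ne_none _ hnone).elim
  · rintro ⟨hpos, -⟩
    rcases Nat.le_one_iff_eq_zero_or_eq_one.mp ht with rfl | rfl
    · exact consH0 f ⟨hpos (Set.mem_insert _ _), hpos (Set.mem_insert_of_mem _ rfl)⟩
    · exact consH1 f ⟨hpos (Set.mem_insert _ _), hpos (Set.mem_insert_of_mem _ rfl)⟩
  · exact (Option.some_ne_none _ hnone).elim
  · rintro ⟨-, hneg⟩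
    exact inter_empty hneg rfl trivial
  · exact (Option.some_ne_none _ hnone).elim

lemma satCh : SatChoices (PiApproxOcc D δ x) (MM D δ x) := by
  rintro c ⟨t, ht, rfl⟩ hpos hneg
  obtain rfl : t = 0 := Nat.lt_one_iff.mp ht
  refine ⟨AAtom.occ x 0, ⟨⟨x, rfl⟩, rfl, rfl⟩, ?_⟩
  rintro y ⟨⟨a, rfl⟩, hm⟩
  rw [hm.1]

lemma MM_answer (consH0 : ConsistentLits (H0 D δ)) (consH1 : ConsistentLits (H1 D δ x))
    (hx : ∃ e ∈ D.execs, e.act = x ∧ e.prem ⊆ δ) :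
    AnswerSet (PiApproxOcc D δ x) (MM D δ x) := by
  refine ⟨satCon D δ x consH0 consH1 hx, satCh D δ x, ⟨?_, ?_⟩, ?_⟩
  · exact MM_semi D δ x (MM D δ x) (fun l h => h) (fun l h => h) (fun l h => h)
  · intro c hc hneg hpos a ha haM; exact haM
  · intro X hX
    exact MM_sub_X D δ x hX (fun l h => h) (fun l h => h) (fun l h => h)

lemma unique_answer (hAS : AnswerSet (PiApproxOcc D δ x) N) : N = MM D δ x := by
  have hG := good_of_answer D δ x hAS
  have hh0 : ∀ l, AAtom.holds l 0 ∈ N → l ∈ H0 D δ := fun l h => hG _ h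
  have hde : ∀ l, AAtom.de l 1 ∈ N → l ∈ DEF D δ x := fun l h => (hG _ h).2
  obtain ⟨hcon, hch, hRC, hmin⟩ := hAS
  have hPH1N : ∀ l ∈ PH1 D δ x, AAtom.ph l 1 ∈ N := PH1X D δ x hRC hh0 hde
  have hNM : N ⊆ MM D δ x := by
    have hRC' : ReductClosed (PiApproxOcc D δ x) N (N ∩ MM D δ x) := by
      constructor
      · intro r hr hneg hpos h hh
        exact ⟨hRC.1 r hr hneg (hpos.trans Set.inter_subset_left) h hh,
          MM_semi D δ x N (H0X D δ x hRC) (DEX D δ x hRC) hPH1N r hr hneg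
            (hpos.trans Set.inter_subset_right) h hh⟩
      · rintro c ⟨t, ht, rfl⟩ hneg hpos a ⟨b, rfl⟩ haN
        obtain rfl : t = 0 := Nat.lt_one_iff.mp ht
        exact ⟨haN, (hG _ haN).1, rfl⟩
    exact fun w hw => (hmin _ hRC' hw).2
  have hMN : MM D δ x ⊆ N :=
    MM_sub_X D δ x hRC hh0 hde (fun l h => hNM h)
  exact Set.Subset.antisymm hNM hMN

end Aux
/-- **One-step soundness of `Π^a`**: if `δ` is a partial state of a consistent
domain `D` and `x` is executable in `δ`, then `Π^a(⟨D,δ,∅⟩,1) ∪ {occ(x,0)}` has a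
unique answer set `M`, and `{ℓ | holds(ℓ,1) ∈ M}` is a partial state of `D`. -/
theorem approx_one_step_unique_answer_set {F A : Type}
    (D : BDomain F A) (hD : ConsistentDomain D)
    (δ : Set (Lit F)) (hδ : IsPartialState D δ)
    (x : A) (hx : ∃ e ∈ D.execs, e.act = x ∧ e.prem ⊆ δ) :
    (∃! M : Set (AAtom F A), AnswerSet (PiApproxOcc D δ x) M) ∧
    (∀ M : Set (AAtom F A), AnswerSet (PiApproxOcc D δ x) M →
        IsPartialState D { l | AAtom.holds l 1 ∈ M }) := by
  obtain ⟨s, s', hs, hs', hH0s, hH1s'⟩ := core D δ x hD hδ hx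
  have consH0 : ConsistentLits (H0 D δ) := fun f hf => hs.2.1 f ⟨hH0s hf.1, hH0s hf.2⟩
  have consH1 : ConsistentLits (H1 D δ x) := fun f hf =>
    hs'.2.1 f ⟨hH1s' hf.1, hH1s' hf.2⟩
  have hMMas := MM_answer D δ x consH0 consH1 hx
  refine ⟨⟨MM D δ x, hMMas, fun N hN => unique_answer D δ x hN⟩, ?_⟩
  intro M hM
  have hEq : M = MM D δ x := unique_answer D δ x hM
  subst hEq
  exact ⟨fun f hf => consH1 f hf, s', hs', fun l hl => hH1s' hl⟩
end

section
/- Let M = (R,(V,E),s,d) be a Multi-Agent Path Finding problem and n ≥ 0. Then the program Π(M,n) has an answer set if and only if M has a collision-free solution of length n; moreover, for every answer set X of Π(M,n), the assignment pos(r,t) = v whenever holds(at(r,v),t) ∈ X is a well-defined collision-free solution of length n of M, and every collision-free solution of length n arises from some answer set in this way. -/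
/- # Multi-Agent Path Finding -/

/-- Atoms of the planning programs. -/
inductive PAtom (F A : Type) where
  | holds : Lit F → ℕ → PAtom F A
  | occ : A → ℕ → PAtom F A
  | possible : A → ℕ → PAtom F A
  | goal : PAtom F A



/-- A MAPF problem `M = (R,(V,E),s,d)`: robots `R`, an undirected graph on `V`, and
injective starting and destination functions. -/
structure MAPF (R V : Type) where
  G : SimpleGraph V
  s : R → V
  d : R → V
  s_inj : Function.Injective s
  d_inj : Function.Injective d

/-- A collision-free solution of length `n` of a MAPF problem. -/
def IsSolution {R V : Type} (M : MAPF R V) (n : ℕ) (pos : R → ℕ → V) : Prop :=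
  (∀ r : R, pos r 0 = M.s r ∧ pos r n = M.d r) ∧
  (∀ (r : R) (t : ℕ), t < n →
      pos r (t + 1) = pos r t ∨ M.G.Adj (pos r t) (pos r (t + 1))) ∧
  (∀ (r r' : R) (t : ℕ), t ≤ n → r ≠ r' → pos r t ≠ pos r' t) ∧
  (∀ (r r' : R) (t : ℕ), t < n → r ≠ r' →
      ¬ (pos r (t + 1) = pos r' t ∧ pos r' (t + 1) = pos r t))

/-- The actions of the MAPF encoding: `move(r,l,l')` and `noop(r)`. -/
inductive MAct (R V : Type) where
  | move : R → V → V → MAct R V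
  | noop : R → MAct R V

/-- The agent performing an action. -/
def MAct.agent {R V : Type} : MAct R V → R
  | .move r _ _ => r
  | .noop r => r

/-- The legal actions: moves along edges of the graph, and `noop`s. -/
def MAPF.IsAct {R V : Type} (M : MAPF R V) : MAct R V → Prop
  | .move _ l l' => M.G.Adj l l'
  | .noop _ => True

/-- Atoms of the MAPF encoding: the fluents are the atoms `at(r,v)`,
represented as pairs `(r,v)`. -/
abbrev MAtom (R V : Type) := PAtom (R × V) (MAct R V)

/-- The program `Π(M,n)`: the union of the encodings `Π(P_r,n)` of the robots'
planning problems (with one copy of the domain-independent rules and a choice rule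
per agent), together with the vertex- and edge-collision constraints. -/
def PiMAPF {R V : Type} (M : MAPF R V) (n : ℕ) : Program (MAtom R V) where
  normals :=
    -- holds(at(r,s(r)),0)
    { x | ∃ r : R, x = ⟨some (PAtom.holds (Lit.pos (r, M.s r)) 0), ∅, ∅⟩ } ∪
    -- holds(at(r,l'),T+1) ← occ(move(r,l,l'),T), holds(at(r,l),T)
    { x | ∃ (r : R) (l l' : V), M.G.Adj l l' ∧ ∃ t < n,
        x = ⟨some (PAtom.holds (Lit.pos (r, l')) (t + 1)),
             {PAtom.occ (MAct.move r l l') t, PAtom.holds (Lit.pos (r, l)) t},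
             ∅⟩ } ∪
    -- holds(¬at(r,l'),T) ← holds(at(r,l),T)  (l ≠ l')
    { x | ∃ (r : R) (l l' : V), l ≠ l' ∧ ∃ t ≤ n,
        x = ⟨some (PAtom.holds (Lit.neg (r, l')) t),
             {PAtom.holds (Lit.pos (r, l)) t}, ∅⟩ } ∪
    -- every action is always executable
    { x | ∃ a : MAct R V, M.IsAct a ∧ ∃ t ≤ n,
        x = ⟨some (PAtom.possible a t), ∅, ∅⟩ } ∪
    -- ← occ(A,T), not possible(A,T)
    { x | ∃ a : MAct R V, M.IsAct a ∧ ∃ t < n,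
        x = ⟨none, {PAtom.occ a t}, {PAtom.possible a t}⟩ } ∪
    -- inertia
    { x | ∃ (l : Lit (R × V)), ∃ t < n,
        x = ⟨some (PAtom.holds l (t + 1)), {PAtom.holds l t},
             {PAtom.holds l.compl (t + 1)}⟩ } ∪
    -- ← holds(F,T), holds(¬F,T)
    { x | ∃ (f : R × V), ∃ t ≤ n,
        x = ⟨none, {PAtom.holds (Lit.pos f) t, PAtom.holds (Lit.neg f) t}, ∅⟩ } ∪
    -- goal ← holds(at(r,d(r)),n) for all robots r  and  ← not goal
    { ⟨some PAtom.goal,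
        { y | ∃ r : R, y = PAtom.holds (Lit.pos (r, M.d r)) n }, ∅⟩,
      ⟨none, ∅, {PAtom.goal}⟩ } ∪
    -- vertex-collision constraint
    { x | ∃ (r r' : R) (v : V), r ≠ r' ∧ ∃ t ≤ n,
        x = ⟨none, {PAtom.holds (Lit.pos (r, v)) t,
                    PAtom.holds (Lit.pos (r', v)) t}, ∅⟩ } ∪
    -- edge-collision constraint
    { x | ∃ (r r' : R) (v v' : V), r ≠ r' ∧ ∃ t < n,
        x = ⟨none, {PAtom.holds (Lit.pos (r, v)) t,
                    PAtom.holds (Lit.pos (r', v')) t,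
                    PAtom.holds (Lit.pos (r, v')) (t + 1),
                    PAtom.holds (Lit.pos (r', v)) (t + 1)}, ∅⟩ }
  choiceRules :=
    -- 1{occ(A,T) : action(R,A)}1 for each agent R and T < n
    { c | ∃ r : R, ∃ t < n,
        c = ⟨{ y | ∃ a : MAct R V, M.IsAct a ∧ a.agent = r ∧ y = PAtom.occ a t },
             ∅, ∅⟩ }


/- # Auxiliary definitions for the proof -/

namespace MAPFCorrect

noncomputable section
open Classical

variable {R V : Type}

/-- Successor position given an action. -/
def nextPos : MAct R V → V → V
  | .move _ l l', cur => if l = cur then l' else cur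
  | .noop _, cur => cur

lemma nextPos_move (r : R) (l l' cur : V) :
    nextPos (MAct.move r l l') cur = if l = cur then l' else cur := rfl

lemma nextPos_noop (r : R) (cur : V) : nextPos (MAct.noop r) cur = cur := rfl

/-- Trajectory determined by a start vertex and a sequence of actions. -/
def traj (s0 : V) (act : ℕ → MAct R V) : ℕ → V
  | 0 => s0
  | t + 1 => nextPos (act t) (traj s0 act t)

/-- The action performed by robot `r` at time `t` in a solution. -/
def solAct (pos : R → ℕ → V) (r : R) (t : ℕ) : MAct R V :=
  if pos r (t + 1) = pos r t then .noop r else .move r (pos r t) (pos r (t + 1))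

/-- The answer set associated with a solution. -/
def solX (M : MAPF R V) (n : ℕ) (pos : R → ℕ → V) : Set (MAtom R V) :=
  { x | (∃ r t, t ≤ n ∧ x = PAtom.holds (Lit.pos (r, pos r t)) t) ∨
        (∃ r v t, t ≤ n ∧ pos r t ≠ v ∧ x = PAtom.holds (Lit.neg (r, v)) t) ∨
        (∃ r t, t < n ∧ x = PAtom.occ (solAct pos r t) t) ∨
        (∃ a : MAct R V, M.IsAct a ∧ ∃ t ≤ n, x = PAtom.possible a t) ∨
        x = PAtom.goal }

section Mem

variable (M : MAPF R V) (n : ℕ)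

lemma memN_init (r : R) :
    (⟨some (PAtom.holds (Lit.pos (r, M.s r)) 0), ∅, ∅⟩ : NRule (MAtom R V)) ∈
      (PiMAPF M n).normals := by
  repeat left
  exact ⟨r, rfl⟩

lemma memN_move {l l' : V} (r : R) (h : M.G.Adj l l') {t : ℕ} (ht : t < n) :
    (⟨some (PAtom.holds (Lit.pos (r, l')) (t + 1)),
      {PAtom.occ (MAct.move r l l') t, PAtom.holds (Lit.pos (r, l)) t},
      ∅⟩ : NRule (MAtom R V)) ∈ (PiMAPF M n).normals := by
  refine Or.inl (Or.inl (Or.inl (Or.inl (Or.inl (Or.inl (Or.inl (Or.inl (Or.inr ?_))))))))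
  exact ⟨r, l, l', h, t, ht, rfl⟩

lemma memN_static {l l' : V} (r : R) (h : l ≠ l') {t : ℕ} (ht : t ≤ n) :
    (⟨some (PAtom.holds (Lit.neg (r, l')) t),
      {PAtom.holds (Lit.pos (r, l)) t}, ∅⟩ : NRule (MAtom R V)) ∈
      (PiMAPF M n).normals := by
  refine Or.inl (Or.inl (Or.inl (Or.inl (Or.inl (Or.inl (Or.inl (Or.inr ?_)))))))
  exact ⟨r, l, l', h, t, ht, rfl⟩

lemma memN_possible {a : MAct R V} (h : M.IsAct a) {t : ℕ} (ht : t ≤ n) :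
    (⟨some (PAtom.possible a t), ∅, ∅⟩ : NRule (MAtom R V)) ∈
      (PiMAPF M n).normals := by
  refine Or.inl (Or.inl (Or.inl (Or.inl (Or.inl (Or.inl (Or.inr ?_))))))
  exact ⟨a, h, t, ht, rfl⟩

lemma memN_inertia (l : Lit (R × V)) {t : ℕ} (ht : t < n) :
    (⟨some (PAtom.holds l (t + 1)), {PAtom.holds l t},
      {PAtom.holds l.compl (t + 1)}⟩ : NRule (MAtom R V)) ∈
      (PiMAPF M n).normals := by
  refine Or.inl (Or.inl (Or.inl (Or.inl (Or.inr ?_))))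
  exact ⟨l, t, ht, rfl⟩

lemma memN_consist (f : R × V) {t : ℕ} (ht : t ≤ n) :
    (⟨none, {PAtom.holds (Lit.pos f) t, PAtom.holds (Lit.neg f) t}, ∅⟩ :
        NRule (MAtom R V)) ∈ (PiMAPF M n).normals := by
  refine Or.inl (Or.inl (Or.inl (Or.inr ?_)))
  exact ⟨f, t, ht, rfl⟩

lemma memN_goalrule :
    (⟨some PAtom.goal,
      { y | ∃ r : R, y = PAtom.holds (Lit.pos (r, M.d r)) n }, ∅⟩ :
        NRule (MAtom R V)) ∈ (PiMAPF M n).normals := by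
  refine Or.inl (Or.inl (Or.inr ?_))
  exact Or.inl rfl

lemma memN_goalconstr :
    (⟨none, ∅, {PAtom.goal}⟩ : NRule (MAtom R V)) ∈ (PiMAPF M n).normals := by
  refine Or.inl (Or.inl (Or.inr ?_))
  exact Or.inr rfl

lemma memN_vertex {r r' : R} (h : r ≠ r') (v : V) {t : ℕ} (ht : t ≤ n) :
    (⟨none, {PAtom.holds (Lit.pos (r, v)) t, PAtom.holds (Lit.pos (r', v)) t},
      ∅⟩ : NRule (MAtom R V)) ∈ (PiMAPF M n).normals := by
  refine Or.inl (Or.inr ?_)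
  exact ⟨r, r', v, h, t, ht, rfl⟩

lemma memN_edge {r r' : R} (h : r ≠ r') (v v' : V) {t : ℕ} (ht : t < n) :
    (⟨none, {PAtom.holds (Lit.pos (r, v)) t, PAtom.holds (Lit.pos (r', v')) t,
      PAtom.holds (Lit.pos (r, v')) (t + 1), PAtom.holds (Lit.pos (r', v)) (t + 1)},
      ∅⟩ : NRule (MAtom R V)) ∈ (PiMAPF M n).normals := by
  refine Or.inr ?_
  exact ⟨r, r', v, v', h, t, ht, rfl⟩

lemma memC (r : R) {t : ℕ} (ht : t < n) :
    (⟨{ y | ∃ a : MAct R V, M.IsAct a ∧ a.agent = r ∧ y = PAtom.occ a t },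
      ∅, ∅⟩ : CRule (MAtom R V)) ∈ (PiMAPF M n).choiceRules :=
  ⟨r, t, ht, rfl⟩

end Mem

end
end MAPFCorrect

namespace MAPFCorrect

variable {R V : Type} {M : MAPF R V} {n : ℕ} {pos : R → ℕ → V}

lemma solAct_agent (pos : R → ℕ → V) (r : R) (t : ℕ) : (solAct pos r t).agent = r := by
  unfold solAct; split <;> rfl

lemma solAct_isAct (hsol : IsSolution M n pos) (r : R) {t : ℕ} (ht : t < n) :
    M.IsAct (solAct pos r t) := by
  unfold solAct; split
  · trivial
  · rename_i hne
    rcases hsol.2.1 r t ht with h | h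
    · exact absurd h hne
    · exact h

lemma mem_solX_pos {r : R} {v : V} {t : ℕ} :
    PAtom.holds (Lit.pos (r, v)) t ∈ solX M n pos ↔ t ≤ n ∧ pos r t = v := by
  constructor
  · rintro (⟨r', t', ht', he⟩ | ⟨r', v', t', ht', hne, he⟩ | ⟨r', t', ht', he⟩ |
      ⟨a, ha, t', ht', he⟩ | he) <;> simp_all [PAtom.holds.injEq]
  · rintro ⟨ht, hv⟩
    exact Or.inl ⟨r, t, ht, by rw [hv]⟩

lemma mem_solX_neg {r : R} {v : V} {t : ℕ} :
    PAtom.holds (Lit.neg (r, v)) t ∈ solX M n pos ↔ t ≤ n ∧ pos r t ≠ v := by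
  constructor
  · rintro (⟨r', t', ht', he⟩ | ⟨r', v', t', ht', hne, he⟩ | ⟨r', t', ht', he⟩ |
      ⟨a, ha, t', ht', he⟩ | he) <;> simp_all [PAtom.holds.injEq]
  · rintro ⟨ht, hv⟩
    exact Or.inr (Or.inl ⟨r, v, t, ht, hv, rfl⟩)

lemma mem_solX_occ {a : MAct R V} {t : ℕ} :
    PAtom.occ a t ∈ solX M n pos ↔ t < n ∧ ∃ r, a = solAct pos r t := by
  constructor
  · rintro (⟨r', t', ht', he⟩ | ⟨r', v', t', ht', hne, he⟩ | ⟨r', t', ht', he⟩ |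
      ⟨a', ha, t', ht', he⟩ | he) <;> simp_all [PAtom.occ.injEq]
    exact ⟨r', rfl⟩
  · rintro ⟨ht, r, rfl⟩
    exact Or.inr (Or.inr (Or.inl ⟨r, t, ht, rfl⟩))

lemma mem_solX_possible {a : MAct R V} {t : ℕ} :
    PAtom.possible a t ∈ solX M n pos ↔ M.IsAct a ∧ t ≤ n := by
  constructor
  · rintro (⟨r', t', ht', he⟩ | ⟨r', v', t', ht', hne, he⟩ | ⟨r', t', ht', he⟩ |
      ⟨a', ha, t', ht', he⟩ | he) <;> simp_all
  · rintro ⟨ha, ht⟩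
    exact Or.inr (Or.inr (Or.inr (Or.inl ⟨a, ha, t, ht, rfl⟩)))

lemma mem_solX_goal : PAtom.goal ∈ solX M n pos := by
  exact Or.inr (Or.inr (Or.inr (Or.inr rfl)))

end MAPFCorrect

namespace MAPFCorrect

variable {R V : Type} {M : MAPF R V} {n : ℕ} {pos : R → ℕ → V}

lemma solAct_eq_move {r r' : R} {l l' : V} {t : ℕ}
    (h : solAct pos r' t = MAct.move r l l') :
    r' = r ∧ pos r' t = l ∧ pos r' (t + 1) = l' := by
  unfold solAct at h
  split at h
  · cases h
  · injection h with h1 h2 h3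
    exact ⟨h1, h2, h3⟩

lemma not_mem_of_inter_empty {At : Type} {a : At} {X : Set At}
    (h : ({a} : Set At) ∩ X = ∅) : a ∉ X := by
  intro hx
  exact absurd h (Set.nonempty_iff_ne_empty.mp ⟨a, rfl, hx⟩)

lemma solX_answerSet (hsol : IsSolution M n pos) :
    AnswerSet (PiMAPF M n) (solX M n pos) := by
  set X := solX M n pos with hXdef
  have hedge := hsol.2.1
  refine ⟨?_, ?_, ?_, ?_⟩
  · -- SatConstraints
    rintro rule hrule hhead ⟨hpos, hneg⟩
    rcases hrule with (((((((((h | h) | h) | h) | h) | h) | h) | h) | h) | h)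
    · obtain ⟨r, rfl⟩ := h; cases hhead
    · obtain ⟨r, l, l', hadj, t, ht, rfl⟩ := h; cases hhead
    · obtain ⟨r, l, l', hne, t, ht, rfl⟩ := h; cases hhead
    · obtain ⟨a, ha, t, ht, rfl⟩ := h; cases hhead
    · -- exec constraint
      obtain ⟨a, ha, t, ht, rfl⟩ := h
      exact not_mem_of_inter_empty hneg (mem_solX_possible.mpr ⟨ha, le_of_lt ht⟩)
    · obtain ⟨l, t, ht, rfl⟩ := h; cases hhead
    · -- consistency
      obtain ⟨⟨r, v⟩, t, ht, rfl⟩ := h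
      simp only [Set.insert_subset_iff, Set.singleton_subset_iff] at hpos
      obtain ⟨h1, h2⟩ := hpos
      exact (mem_solX_neg.mp h2).2 (mem_solX_pos.mp h1).2
    · rcases h with h | h
      · subst h; cases hhead
      · subst h
        exact not_mem_of_inter_empty hneg mem_solX_goal
    · -- vertex collision
      obtain ⟨r, r', v, hne, t, ht, rfl⟩ := h
      simp only [Set.insert_subset_iff, Set.singleton_subset_iff] at hpos
      obtain ⟨h1, h2⟩ := hpos
      exact hsol.2.2.1 r r' t ht hne
        ((mem_solX_pos.mp h1).2.trans (mem_solX_pos.mp h2).2.symm)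
    · -- edge collision
      obtain ⟨r, r', v, v', hne, t, ht, rfl⟩ := h
      simp only [Set.insert_subset_iff, Set.singleton_subset_iff] at hpos
      obtain ⟨h1, h2, h3, h4⟩ := hpos
      refine hsol.2.2.2 r r' t ht hne ⟨?_, ?_⟩
      · rw [(mem_solX_pos.mp h3).2, ← (mem_solX_pos.mp h2).2]
      · rw [(mem_solX_pos.mp h4).2, ← (mem_solX_pos.mp h1).2]
  · -- SatChoices
    rintro c ⟨r, t, ht, rfl⟩ hcpos hcneg
    refine ⟨PAtom.occ (solAct pos r t) t,
      ⟨⟨solAct pos r t, solAct_isAct hsol r ht, solAct_agent pos r t, rfl⟩,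
        mem_solX_occ.mpr ⟨ht, r, rfl⟩⟩, ?_⟩
    rintro y ⟨⟨a, ha, hag, rfl⟩, hy⟩
    obtain ⟨ht', r'', ha'⟩ := mem_solX_occ.mp hy
    subst ha'
    rw [solAct_agent pos r'' t] at hag
    rw [hag]
  · -- ReductClosed X X
    constructor
    · rintro rule hrule hneg hpos h hh
      rcases hrule with (((((((((hr | hr) | hr) | hr) | hr) | hr) | hr) | hr) | hr) | hr)
      · -- init
        obtain ⟨r, rfl⟩ := hr
        cases hh
        exact mem_solX_pos.mpr ⟨Nat.zero_le n, (hsol.1 r).1⟩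
      · -- move effect
        obtain ⟨r, l, l', hadj, t, ht, rfl⟩ := hr
        cases hh
        simp only [Set.insert_subset_iff, Set.singleton_subset_iff] at hpos
        obtain ⟨hocc, hat⟩ := hpos
        obtain ⟨ht', r'', ha'⟩ := mem_solX_occ.mp hocc
        obtain ⟨hre, hl, hl'⟩ := solAct_eq_move ha'.symm
        subst hre
        exact mem_solX_pos.mpr ⟨ht, hl'⟩
      · -- static
        obtain ⟨r, l, l', hne, t, ht, rfl⟩ := hr
        cases hh
        simp only [Set.singleton_subset_iff] at hpos
        obtain ⟨-, hl⟩ := mem_solX_pos.mp hpos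
        exact mem_solX_neg.mpr ⟨ht, by rw [hl]; exact hne⟩
      · -- possible facts
        obtain ⟨a, ha, t, ht, rfl⟩ := hr
        cases hh
        exact mem_solX_possible.mpr ⟨ha, ht⟩
      · obtain ⟨a, ha, t, ht, rfl⟩ := hr; cases hh
      · -- inertia
        obtain ⟨l, t, ht, rfl⟩ := hr
        cases hh
        simp only [Set.singleton_subset_iff] at hpos
        obtain ⟨r, v⟩ | ⟨r, v⟩ := l
        · obtain ⟨-, hv⟩ := mem_solX_pos.mp hpos
          have hnc := not_mem_of_inter_empty hneg
          simp only [Lit.compl] at hnc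
          have : pos r (t + 1) = v := by
            by_contra hcon
            exact hnc (mem_solX_neg.mpr ⟨ht, hcon⟩)
          exact mem_solX_pos.mpr ⟨ht, this⟩
        · obtain ⟨-, hv⟩ := mem_solX_neg.mp hpos
          have hnc := not_mem_of_inter_empty hneg
          simp only [Lit.compl] at hnc
          have : pos r (t + 1) ≠ v := by
            intro hcon
            exact hnc (mem_solX_pos.mpr ⟨ht, hcon⟩)
          exact mem_solX_neg.mpr ⟨ht, this⟩
      · obtain ⟨f, t, ht, rfl⟩ := hr; cases hh
      · rcases hr with hr | hr
        · subst hr; cases hh; exact mem_solX_goal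
        · subst hr; cases hh
      · obtain ⟨r, r', v, hne, t, ht, rfl⟩ := hr; cases hh
      · obtain ⟨r, r', v, v', hne, t, ht, rfl⟩ := hr; cases hh
    · rintro c ⟨r, t, ht, rfl⟩ hcn hcp a ha haX
      exact haX
  · -- minimality
    rintro Z ⟨hZ1, hZ2⟩
    have hemptyN : ∀ X' : Set (MAtom R V), (∅ : Set (MAtom R V)) ∩ X' = ∅ :=
      fun _ => Set.empty_inter _
    have occZ : ∀ t, t < n → ∀ r, PAtom.occ (solAct pos r t) t ∈ Z := by
      intro t ht r
      exact hZ2 _ (memC M n r ht) (hemptyN X) (Set.empty_subset Z)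
        (PAtom.occ (solAct pos r t) t)
        ⟨solAct pos r t, solAct_isAct hsol r ht, solAct_agent pos r t, rfl⟩
        (mem_solX_occ.mpr ⟨ht, r, rfl⟩)
    have posZ : ∀ t, t ≤ n → ∀ r, PAtom.holds (Lit.pos (r, pos r t)) t ∈ Z := by
      intro t
      induction t with
      | zero =>
        intro _ r
        have := hZ1 _ (memN_init M n r) (hemptyN X) (Set.empty_subset Z)
          (PAtom.holds (Lit.pos (r, M.s r)) 0) rfl
        rwa [← (hsol.1 r).1] at this
      | succ t ih =>
        intro ht r
        have ht' : t < n := ht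
        have hprev := ih (le_of_lt ht') r
        by_cases hmove : pos r (t + 1) = pos r t
        · -- inertia
          have hnegX : ({PAtom.holds (Lit.neg (r, pos r t)) (t+1)} : Set (MAtom R V)) ∩ X = ∅ := by
            apply Set.eq_empty_iff_forall_notMem.mpr
            rintro y ⟨hy1, hy2⟩
            rw [Set.mem_singleton_iff] at hy1
            subst hy1
            exact (mem_solX_neg.mp hy2).2 hmove
          have := hZ1 _ (memN_inertia M n (Lit.pos (r, pos r t)) ht') hnegX
            (Set.singleton_subset_iff.mpr hprev)
            (PAtom.holds (Lit.pos (r, pos r t)) (t+1)) rfl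
          rwa [← hmove] at this
        · -- move
          have hadj : M.G.Adj (pos r t) (pos r (t + 1)) := by
            rcases hedge r t ht' with h | h
            · exact absurd h hmove
            · exact h
          have hact : solAct pos r t = MAct.move r (pos r t) (pos r (t + 1)) := by
            unfold solAct; rw [if_neg hmove]
          have hbody : ({PAtom.occ (MAct.move r (pos r t) (pos r (t+1))) t,
              PAtom.holds (Lit.pos (r, pos r t)) t} : Set (MAtom R V)) ⊆ Z := by
            rw [Set.insert_subset_iff, Set.singleton_subset_iff]
            exact ⟨hact ▸ occZ t ht' r, hprev⟩
          exact hZ1 _ (memN_move M n r hadj ht') (hemptyN X) hbody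
            (PAtom.holds (Lit.pos (r, pos r (t+1))) (t+1)) rfl
    have negZ : ∀ t, t ≤ n → ∀ r v, pos r t ≠ v →
        PAtom.holds (Lit.neg (r, v)) t ∈ Z := by
      intro t ht r v hne
      exact hZ1 _ (memN_static M n r hne ht) (hemptyN X)
        (Set.singleton_subset_iff.mpr (posZ t ht r))
        (PAtom.holds (Lit.neg (r, v)) t) rfl
    rintro x (⟨r, t, ht, rfl⟩ | ⟨r, v, t, ht, hne, rfl⟩ | ⟨r, t, ht, rfl⟩ |
      ⟨a, ha, t, ht, rfl⟩ | rfl)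
    · exact posZ t ht r
    · exact negZ t ht r v hne
    · exact occZ t ht r
    · exact hZ1 _ (memN_possible M n ha ht) (hemptyN X) (Set.empty_subset Z)
        (PAtom.possible a t) rfl
    · refine hZ1 _ (memN_goalrule M n) (hemptyN X) ?_ PAtom.goal rfl
      rintro y ⟨r, rfl⟩
      have := posZ n le_rfl r
      rwa [(hsol.1 r).2] at this

end MAPFCorrect

namespace MAPFCorrect

variable {R V : Type}

lemma answerSet_sol {M : MAPF R V} {n : ℕ} {X : Set (MAtom R V)}
    (hX : AnswerSet (PiMAPF M n) X) :
    ∃ pos : R → ℕ → V, IsSolution M n pos ∧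
      ∀ (r : R) (v : V) (t : ℕ), t ≤ n →
        (PAtom.holds (Lit.pos (r, v)) t ∈ X ↔ pos r t = v) := by
  obtain ⟨hSat, hCh, ⟨hCl1, hCl2⟩, hMin⟩ := hX
  have hemptyN : ((∅ : Set (MAtom R V)) ∩ X = ∅) := Set.empty_inter _
  -- the unique chosen action of each robot at each time step
  have key : ∀ (r : R) (t : ℕ), ∃ a : MAct R V, t < n →
      M.IsAct a ∧ a.agent = r ∧ PAtom.occ a t ∈ X ∧
        ∀ a', M.IsAct a' → a'.agent = r → PAtom.occ a' t ∈ X → a' = a := by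
    intro r t
    by_cases ht : t < n
    · obtain ⟨y, ⟨⟨a, ha, hag, rfl⟩, hyX⟩, huniq⟩ :=
        hCh _ (memC M n r ht) (Set.empty_subset X) hemptyN
      refine ⟨a, fun _ => ⟨ha, hag, hyX, ?_⟩⟩
      intro a' ha' hag' hX'
      have := huniq (PAtom.occ a' t) ⟨⟨a', ha', hag', rfl⟩, hX'⟩
      injection this
    · exact ⟨.noop r, fun h => absurd h ht⟩
  choose act hact using key
  set p : R → ℕ → V := fun r => traj (M.s r) (act r) with hp
  have psucc : ∀ r t, p r (t + 1) = nextPos (act r t) (p r t) := fun _ _ => rfl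
  have pzero : ∀ r, p r 0 = M.s r := fun _ => rfl
  have occX : ∀ r t, t < n → PAtom.occ (act r t) t ∈ X :=
    fun r t ht => (hact r t ht).2.2.1
  have actU : ∀ r t, t < n → ∀ a : MAct R V, M.IsAct a → a.agent = r →
      PAtom.occ a t ∈ X → a = act r t :=
    fun r t ht => (hact r t ht).2.2.2
  have stepCases : ∀ r t, t < n → p r (t + 1) = p r t ∨
      ∃ l', act r t = .move r (p r t) l' ∧ p r (t + 1) = l' ∧
        M.G.Adj (p r t) l' := by
    intro r t ht
    rcases hA : act r t with ⟨r0, l, l'⟩ | r0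
    · have hag : r0 = r := by
        have := (hact r t ht).2.1
        rw [hA] at this
        simpa [MAct.agent] using this
      rw [hag] at hA
      have hadj : M.G.Adj l l' := by
        have := (hact r t ht).1
        rwa [hA] at this
      by_cases hl : l = p r t
      · refine Or.inr ⟨l', ?_, ?_, ?_⟩
        · rw [hag, hl]
        · rw [psucc, hA, nextPos_move, if_pos hl]
        · rw [← hl]; exact hadj
      · left
        rw [psucc, hA, nextPos_move, if_neg hl]
    · left
      rw [psucc, hA, nextPos_noop]
  -- firing of the move-effect rule
  have moveFire : ∀ r (l' : V) t, t < n → act r t = .move r (p r t) l' →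
      M.G.Adj (p r t) l' → PAtom.holds (Lit.pos (r, p r t)) t ∈ X →
      PAtom.holds (Lit.pos (r, l')) (t + 1) ∈ X := by
    intro r l' t ht hA hadj hcur
    refine hCl1 _ (memN_move M n r hadj ht) hemptyN ?_ _ rfl
    rw [Set.insert_subset_iff, Set.singleton_subset_iff]
    exact ⟨hA ▸ occX r t ht, hcur⟩
  have staticFire : ∀ r (v v' : V) t, t ≤ n → v ≠ v' →
      PAtom.holds (Lit.pos (r, v)) t ∈ X →
      PAtom.holds (Lit.neg (r, v')) t ∈ X := by
    intro r v v' t ht hne hv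
    exact hCl1 _ (memN_static M n r hne ht) hemptyN
      (Set.singleton_subset_iff.mpr hv) _ rfl
  -- the main induction: positions in X agree with `p`, and `p` is realized in `X`
  have main : ∀ T, T ≤ n →
      (∀ r v, (PAtom.holds (Lit.pos (r, v)) T ∈ X → p r T = v) ∧
        (PAtom.holds (Lit.neg (r, v)) T ∈ X → p r T ≠ v)) ∧
      (∀ r, PAtom.holds (Lit.pos (r, p r T)) T ∈ X) := by
    intro T
    induction T with
    | zero =>
      intro _
      have hEx : ∀ r, PAtom.holds (Lit.pos (r, p r 0)) 0 ∈ X := by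
        intro r
        exact hCl1 _ (memN_init M n r) hemptyN (Set.empty_subset X) _ rfl
      set B : Set (MAtom R V) :=
        { x | (∃ r v, x = PAtom.holds (Lit.pos (r, v)) 0 ∧ p r 0 ≠ v) ∨
              (∃ r, x = PAtom.holds (Lit.neg (r, p r 0)) 0) } with hB
      have hBcl : ReductClosed (PiMAPF M n) X (X \ B) := by
        constructor
        · rintro rule hrule hneg hpos h hh
          have hhX : h ∈ X :=
            hCl1 rule hrule hneg (hpos.trans Set.diff_subset) h hh
          refine ⟨hhX, ?_⟩
          rintro hhB
          rcases hrule with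
            (((((((((hr | hr) | hr) | hr) | hr) | hr) | hr) | hr) | hr) | hr)
          · -- init
            obtain ⟨r', he⟩ := hr
            subst he
            simp only [Option.some.injEq] at hh
            subst hh
            rcases hhB with ⟨r, v, heq, hnev⟩ | ⟨r, heq⟩
            · simp only [PAtom.holds.injEq, Lit.pos.injEq, Prod.mk.injEq] at heq
              obtain ⟨⟨h1, h2⟩, -⟩ := heq
              exact hnev (by rw [← h1, ← h2, pzero])
            · simp at heq
          · -- move effect: head at positive time
            obtain ⟨r', l, l', hadj, t, ht, he⟩ := hr
            subst he
            simp only [Option.some.injEq] at hh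
            subst hh
            rcases hhB with ⟨r, v, heq, -⟩ | ⟨r, heq⟩ <;> simp at heq
          · -- static
            obtain ⟨r', l, l', hne, t, ht, he⟩ := hr
            subst he
            simp only [Option.some.injEq] at hh
            subst hh
            rcases hhB with ⟨r, v, heq, -⟩ | ⟨r, heq⟩
            · simp at heq
            · simp only [PAtom.holds.injEq, Lit.neg.injEq, Prod.mk.injEq] at heq
              obtain ⟨⟨h1, h2⟩, h3⟩ := heq
              subst h3
              have hbody : PAtom.holds (Lit.pos (r', l)) 0 ∈ X \ B := hpos rfl
              have hl : p r' 0 = l := by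
                by_contra hcon
                exact hbody.2 (Or.inl ⟨r', l, rfl, hcon⟩)
              exact hne (by rw [← hl, h2, h1])
          · -- possible
            obtain ⟨a, ha, t, ht, he⟩ := hr
            subst he
            simp only [Option.some.injEq] at hh
            subst hh
            rcases hhB with ⟨r, v, heq, -⟩ | ⟨r, heq⟩ <;> simp at heq
          · obtain ⟨a, ha, t, ht, he⟩ := hr; subst he; simp at hh
          · -- inertia: head at positive time
            obtain ⟨l0, t, ht, he⟩ := hr
            subst he
            simp only [Option.some.injEq] at hh
            subst hh
            rcases hhB with ⟨r, v, heq, -⟩ | ⟨r, heq⟩ <;>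
              (rcases l0 with f | f <;> simp at heq)
          · obtain ⟨f, t, ht, he⟩ := hr; subst he; simp at hh
          · rcases hr with he | he
            · subst he
              simp only [Option.some.injEq] at hh
              subst hh
              rcases hhB with ⟨r, v, heq, -⟩ | ⟨r, heq⟩ <;> simp at heq
            · subst he; simp at hh
          · obtain ⟨r', r'', v', hne, t, ht, he⟩ := hr; subst he; simp at hh
          · obtain ⟨r', r'', v', v'', hne, t, ht, he⟩ := hr; subst he; simp at hh
        · rintro c ⟨r, t, ht, rfl⟩ hcn hcp a ⟨a', ha', hag', rfl⟩ haX
          refine ⟨haX, ?_⟩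
          rintro (⟨r', v', heq, -⟩ | ⟨r', heq⟩) <;> simp at heq
      have hsub := hMin _ hBcl
      refine ⟨?_, hEx⟩
      intro r v
      constructor
      · intro hmem
        by_contra hcon
        exact (hsub hmem).2 (Or.inl ⟨r, v, rfl, hcon⟩)
      · intro hmem hcon
        subst hcon
        exact (hsub hmem).2 (Or.inr ⟨r, rfl⟩)
    | succ T ih =>
      intro hTn
      have hTlt : T < n := hTn
      obtain ⟨hGood, hEx⟩ := ih (le_of_lt hTlt)
      set B : Set (MAtom R V) :=
        { x | (∃ r v, x = PAtom.holds (Lit.pos (r, v)) (T + 1) ∧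
                p r (T + 1) ≠ v) ∨
              (∃ r, x = PAtom.holds (Lit.neg (r, p r (T + 1))) (T + 1)) } with hB
      have hBcl : ReductClosed (PiMAPF M n) X (X \ B) := by
        constructor
        · rintro rule hrule hneg hpos h hh
          have hhX : h ∈ X :=
            hCl1 rule hrule hneg (hpos.trans Set.diff_subset) h hh
          refine ⟨hhX, ?_⟩
          rintro hhB
          rcases hrule with
            (((((((((hr | hr) | hr) | hr) | hr) | hr) | hr) | hr) | hr) | hr)
          · -- init: time 0 ≠ T+1
            obtain ⟨r', he⟩ := hr
            subst he
            simp only [Option.some.injEq] at hh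
            subst hh
            rcases hhB with ⟨r, v, heq, -⟩ | ⟨r, heq⟩ <;> simp at heq
          · -- move effect
            obtain ⟨r', l, l', hadj, t, ht, he⟩ := hr
            subst he
            simp only [Option.some.injEq] at hh
            subst hh
            rcases hhB with ⟨r, v, heq, hnev⟩ | ⟨r, heq⟩
            · simp only [PAtom.holds.injEq, Lit.pos.injEq, Prod.mk.injEq,
                Nat.add_right_cancel_iff] at heq
              obtain ⟨⟨h1, h2⟩, h3⟩ := heq
              subst h3
              have hocc : PAtom.occ (MAct.move r' l l') t ∈ X :=
                (hpos (by simp)).1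
              have hcur : PAtom.holds (Lit.pos (r', l)) t ∈ X :=
                (hpos (by simp)).1
              have hA : MAct.move r' l l' = act r' t :=
                actU r' t hTlt _ hadj rfl hocc
              have hl : p r' t = l := (hGood r' l).1 hcur
              apply hnev
              rw [← h1, ← h2, psucc, ← hA, nextPos_move, hl, if_pos rfl]
            · simp at heq
          · -- static
            obtain ⟨r', l, l', hne, t, ht, he⟩ := hr
            subst he
            simp only [Option.some.injEq] at hh
            subst hh
            rcases hhB with ⟨r, v, heq, -⟩ | ⟨r, heq⟩
            · simp at heq
            · simp only [PAtom.holds.injEq, Lit.neg.injEq, Prod.mk.injEq] at heq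
              obtain ⟨⟨h1, h2⟩, h3⟩ := heq
              subst h3
              have hbody : PAtom.holds (Lit.pos (r', l)) (T + 1) ∈ X \ B :=
                hpos rfl
              have hl : p r' (T + 1) = l := by
                by_contra hcon
                exact hbody.2 (Or.inl ⟨r', l, rfl, hcon⟩)
              exact hne (by rw [← hl, h2, h1])
          · -- possible
            obtain ⟨a, ha, t, ht, he⟩ := hr
            subst he
            simp only [Option.some.injEq] at hh
            subst hh
            rcases hhB with ⟨r, v, heq, -⟩ | ⟨r, heq⟩ <;> simp at heq
          · obtain ⟨a, ha, t, ht, he⟩ := hr; subst he; simp at hh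
          · -- inertia
            obtain ⟨l0, t, ht, he⟩ := hr
            subst he
            simp only [Option.some.injEq] at hh
            subst hh
            have hnegX := not_mem_of_inter_empty hneg
            rcases hhB with ⟨r, v, heq, hnev⟩ | ⟨r, heq⟩
            · rcases l0 with ⟨r0, v0⟩ | ⟨r0, v0⟩
              · simp only [PAtom.holds.injEq, Lit.pos.injEq, Prod.mk.injEq,
                  Nat.add_right_cancel_iff] at heq
                obtain ⟨⟨h1, h2⟩, h3⟩ := heq
                subst h3
                rw [← h1, ← h2] at hnev
                simp only [Lit.compl] at hnegX
                have hcur : PAtom.holds (Lit.pos (r0, v0)) t ∈ X := (hpos rfl).1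
                have hv : p r0 t = v0 := (hGood r0 v0).1 hcur
                rcases stepCases r0 t hTlt with hstep | ⟨l', hA, hstep, hadj⟩
                · exact hnev (hstep.trans hv)
                · have hl'ne : l' ≠ v0 := fun hc => hnev (hstep.trans hc)
                  have hX' : PAtom.holds (Lit.pos (r0, l')) (t + 1) ∈ X :=
                    moveFire r0 l' t hTlt hA hadj (hEx r0)
                  exact hnegX (staticFire r0 l' v0 (t + 1) hTn hl'ne hX')
              · simp at heq
            · rcases l0 with ⟨r0, v0⟩ | ⟨r0, v0⟩
              · simp at heq
              · simp only [PAtom.holds.injEq, Lit.neg.injEq, Prod.mk.injEq,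
                  Nat.add_right_cancel_iff] at heq
                obtain ⟨⟨h1, h2⟩, h3⟩ := heq
                subst h3
                rw [← h1] at h2
                simp only [Lit.compl] at hnegX
                have hcur : PAtom.holds (Lit.neg (r0, v0)) t ∈ X := (hpos rfl).1
                have hv : p r0 t ≠ v0 := (hGood r0 v0).2 hcur
                rcases stepCases r0 t hTlt with hstep | ⟨l', hA, hstep, hadj⟩
                · exact hv ((h2.trans hstep).symm)
                · apply hnegX
                  have := moveFire r0 l' t hTlt hA hadj (hEx r0)
                  rwa [h2, hstep]
          · obtain ⟨f, t, ht, he⟩ := hr; subst he; simp at hh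
          · rcases hr with he | he
            · subst he
              simp only [Option.some.injEq] at hh
              subst hh
              rcases hhB with ⟨r, v, heq, -⟩ | ⟨r, heq⟩ <;> simp at heq
            · subst he; simp at hh
          · obtain ⟨r', r'', v', hne, t, ht, he⟩ := hr; subst he; simp at hh
          · obtain ⟨r', r'', v', v'', hne, t, ht, he⟩ := hr; subst he; simp at hh
        · rintro c ⟨r, t, ht, rfl⟩ hcn hcp a ⟨a', ha', hag', rfl⟩ haX
          refine ⟨haX, ?_⟩
          rintro (⟨r', v', heq, -⟩ | ⟨r', heq⟩) <;> simp at heq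
      have hsub := hMin _ hBcl
      have hGoodPos : ∀ r v, PAtom.holds (Lit.pos (r, v)) (T + 1) ∈ X →
          p r (T + 1) = v := by
        intro r v hmem
        by_contra hcon
        exact (hsub hmem).2 (Or.inl ⟨r, v, rfl, hcon⟩)
      have hNoBadNeg : ∀ r,
          PAtom.holds (Lit.neg (r, p r (T + 1))) (T + 1) ∉ X := by
        intro r hmem
        exact (hsub hmem).2 (Or.inr ⟨r, rfl⟩)
      have hEx' : ∀ r, PAtom.holds (Lit.pos (r, p r (T + 1))) (T + 1) ∈ X := by
        intro r
        rcases stepCases r T hTlt with hstep | ⟨l', hA, hstep, hadj⟩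
        · have hnegc : ({PAtom.holds (Lit.neg (r, p r T)) (T + 1)} :
              Set (MAtom R V)) ∩ X = ∅ := by
            apply Set.eq_empty_iff_forall_notMem.mpr
            rintro y ⟨hy1, hy2⟩
            rw [Set.mem_singleton_iff] at hy1
            subst hy1
            exact hNoBadNeg r (hstep ▸ hy2)
          have := hCl1 _ (memN_inertia M n (Lit.pos (r, p r T)) hTlt)
            (by simpa [Lit.compl] using hnegc)
            (Set.singleton_subset_iff.mpr (hEx r)) _ rfl
          rwa [hstep]
        · have := moveFire r l' T hTlt hA hadj (hEx r)
          rwa [← hstep] at this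
      refine ⟨fun r v => ⟨hGoodPos r v, ?_⟩, hEx'⟩
      intro hmem hcon
      subst hcon
      exact hNoBadNeg r hmem
  -- `goal` is in `X`, hence all robots reach their destinations
  have hgoalX : PAtom.goal ∈ X := by
    by_contra hgoal
    refine hSat _ (memN_goalconstr M n) rfl ⟨Set.empty_subset X, ?_⟩
    apply Set.eq_empty_iff_forall_notMem.mpr
    rintro y ⟨hy1, hy2⟩
    rw [Set.mem_singleton_iff] at hy1
    subst hy1
    exact hgoal hy2
  have hdest : ∀ r, PAtom.holds (Lit.pos (r, M.d r)) n ∈ X := by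
    by_contra hcon
    push_neg at hcon
    obtain ⟨r0, hr0⟩ := hcon
    have hZcl : ReductClosed (PiMAPF M n) X (X \ {PAtom.goal}) := by
      constructor
      · rintro rule hrule hneg hpos h hh
        have hhX : h ∈ X :=
          hCl1 rule hrule hneg (hpos.trans Set.diff_subset) h hh
        refine ⟨hhX, ?_⟩
        intro hhG
        rw [Set.mem_singleton_iff] at hhG
        subst hhG
        rcases hrule with
          (((((((((hr | hr) | hr) | hr) | hr) | hr) | hr) | hr) | hr) | hr)
        · obtain ⟨r', he⟩ := hr; subst he; simp at hh
        · obtain ⟨r', l, l', hadj, t, ht, he⟩ := hr; subst he; simp at hh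
        · obtain ⟨r', l, l', hne, t, ht, he⟩ := hr; subst he; simp at hh
        · obtain ⟨a, ha, t, ht, he⟩ := hr; subst he; simp at hh
        · obtain ⟨a, ha, t, ht, he⟩ := hr; subst he; simp at hh
        · obtain ⟨l0, t, ht, he⟩ := hr; subst he; simp at hh
        · obtain ⟨f, t, ht, he⟩ := hr; subst he; simp at hh
        · rcases hr with he | he
          · subst he
            exact hr0 (hpos ⟨r0, rfl⟩).1
          · subst he; simp at hh
        · obtain ⟨r', r'', v', hne, t, ht, he⟩ := hr; subst he; simp at hh
        · obtain ⟨r', r'', v', v'', hne, t, ht, he⟩ := hr; subst he; simp at hh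
      · rintro c ⟨r, t, ht, rfl⟩ hcn hcp a ⟨a', ha', hag', rfl⟩ haX
        exact ⟨haX, by simp⟩
    exact (hMin _ hZcl hgoalX).2 rfl
  have hfinal : ∀ r, p r n = M.d r := fun r =>
    ((main n le_rfl).1 r (M.d r)).1 (hdest r)
  refine ⟨p, ⟨fun r => ⟨pzero r, hfinal r⟩, ?_, ?_, ?_⟩, ?_⟩
  · -- edges
    intro r t ht
    rcases stepCases r t ht with hstep | ⟨l', hA, hstep, hadj⟩
    · exact Or.inl hstep
    · exact Or.inr (hstep ▸ hadj)
  · -- vertex collisions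
    intro r r' t ht hne heq
    have h1 := (main t ht).2 r
    have h2 := (main t ht).2 r'
    rw [← heq] at h2
    refine hSat _ (memN_vertex M n hne (p r t) ht) rfl ⟨?_, Set.empty_inter X⟩
    rw [Set.insert_subset_iff, Set.singleton_subset_iff]
    exact ⟨h1, h2⟩
  · -- edge collisions
    rintro r r' t ht hne ⟨hc1, hc2⟩
    have htn : t ≤ n := le_of_lt ht
    have htn' : t + 1 ≤ n := ht
    have h1 := (main t htn).2 r
    have h2 := (main t htn).2 r'
    have h3 := (main (t + 1) htn').2 r
    have h4 := (main (t + 1) htn').2 r'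
    rw [hc1] at h3
    rw [hc2] at h4
    refine hSat _ (memN_edge M n hne (p r t) (p r' t) ht) rfl
      ⟨?_, Set.empty_inter X⟩
    simp only [Set.insert_subset_iff, Set.singleton_subset_iff]
    exact ⟨h1, h2, h3, h4⟩
  · -- correspondence
    intro r v t ht
    exact ⟨fun h => ((main t ht).1 r v).1 h, fun h => h ▸ (main t ht).2 r⟩

end MAPFCorrect

/-- **Correctness of the MAPF encoding**: `Π(M,n)` has an answer set iff `M` has a
collision-free solution of length `n`; every answer set determines such a solution
via `pos(r,t) = v ⟺ holds(at(r,v),t) ∈ X`, and every solution arises from some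
answer set in this way. -/
theorem mapf_encoding_correctness {R V : Type} (M : MAPF R V) (n : ℕ) :
    ((∃ X : Set (MAtom R V), AnswerSet (PiMAPF M n) X) ↔
        ∃ pos : R → ℕ → V, IsSolution M n pos) ∧
    (∀ X : Set (MAtom R V), AnswerSet (PiMAPF M n) X →
        ∃ pos : R → ℕ → V, IsSolution M n pos ∧
          ∀ (r : R) (v : V) (t : ℕ), t ≤ n →
            (PAtom.holds (Lit.pos (r, v)) t ∈ X ↔ pos r t = v)) ∧
    (∀ pos : R → ℕ → V, IsSolution M n pos →
        ∃ X : Set (MAtom R V), AnswerSet (PiMAPF M n) X ∧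
          ∀ (r : R) (v : V) (t : ℕ), t ≤ n →
            (PAtom.holds (Lit.pos (r, v)) t ∈ X ↔ pos r t = v)) := by
  constructor
  · constructor
    · rintro ⟨X, hX⟩
      obtain ⟨p, hp, -⟩ := MAPFCorrect.answerSet_sol hX
      exact ⟨p, hp⟩
    · rintro ⟨pos, hsol⟩
      exact ⟨_, MAPFCorrect.solX_answerSet hsol⟩
  constructor
  · intro X hX
    exact MAPFCorrect.answerSet_sol hX
  · intro pos hsol
    refine ⟨MAPFCorrect.solX M n pos, MAPFCorrect.solX_answerSet hsol, ?_⟩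
    intro r v t ht
    rw [MAPFCorrect.mem_solX_pos]
    exact ⟨fun h => h.2, fun h => ⟨ht, h⟩⟩
end
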